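/- For any binary relation S contained in the order relation of a finite lattice L, the left lifting class ^⧄S is a cotransfer system on L, and the right lifting class S^⧄ is a transfer system on L. -/

import Mathlib

/-- The five-element nonmodular lattice `N₅` with `0 < A < C < 1`, `0 < B < 1`,
and `B` incomparable to `A` and `C`. -/
inductive N5 : Type
  | zero | A | B | C | one
  deriving DecidableEq

instance : Fintype N5 :=
  ⟨⟨[N5.zero, N5.A, N5.B, N5.C, N5.one], by decide⟩, fun x => by cases x <;> decide⟩

namespace N5

def leBool : N5 → N5 → Bool
  | zero, _ => true
  | _, one => true
  | A, A => true
  | A, C => true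
  | B, B => true
  | C, C => true
  | _, _ => false

instance : LE N5 := ⟨fun x y => leBool x y = true⟩

instance : DecidableRel ((· ≤ ·) : N5 → N5 → Prop) :=
  fun x y => inferInstanceAs (Decidable (leBool x y = true))

def supFn (x y : N5) : N5 := if leBool x y then y else if leBool y x then x else one
def infFn (x y : N5) : N5 := if leBool x y then x else if leBool y x then y else zero

instance : Lattice N5 where
  le := (· ≤ ·)
  le_refl := by decide
  le_trans := by decide
  le_antisymm := by decide
  sup := supFn
  le_sup_left := by decide
  le_sup_right := by decide
  sup_le := by decide
  inf := infFn
  inf_le_left := by decide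
  inf_le_right := by decide
  le_inf := by decide

end N5

section Defs

variable {L : Type*} [Lattice L]

/-- `llp S a b`: `a ≤ b` and `(a, b)` has the left lifting property with respect to
every pair in `S`. -/
def llp (S : L → L → Prop) (a b : L) : Prop :=
  a ≤ b ∧ ∀ x y, S x y → a ≤ x → b ≤ y → b ≤ x

/-- `rlp S x y`: `x ≤ y` and every pair in `S` has the left lifting property with
respect to `(x, y)`. -/
def rlp (S : L → L → Prop) (x y : L) : Prop :=
  x ≤ y ∧ ∀ a b, S a b → a ≤ x → b ≤ y → b ≤ x

/-- A transfer system: a reflexive transitive subrelation of `≤` closed under pullbacks. -/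
structure IsTransferSystem (T : L → L → Prop) : Prop where
  subLE : ∀ x y, T x y → x ≤ y
  refl : ∀ x, T x x
  trans : ∀ x y z, T x y → T y z → T x z
  pullback : ∀ x y z, T x y → z ≤ y → T (x ⊓ z) z

/-- A cotransfer system: a reflexive transitive subrelation of `≤` closed under pushouts. -/
structure IsCotransferSystem (K : L → L → Prop) : Prop where
  subLE : ∀ x y, K x y → x ≤ y
  refl : ∀ x, K x x
  trans : ∀ x y z, K x y → K y z → K x z
  pushout : ∀ x y z, K x y → x ≤ z → K z (y ⊔ z)

/-- A wide decomposable subcategory of a lattice. -/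
structure IsWideDecomposable (W : L → L → Prop) : Prop where
  subLE : ∀ x y, W x y → x ≤ y
  refl : ∀ x, W x x
  trans : ∀ x y z, W x y → W y z → W x z
  decomp : ∀ x y z, W x z → x ≤ y → y ≤ z → W x y ∧ W y z

/-- A model structure on a lattice, given by weak equivalences `W`, cofibrations `C`
and fibrations `F`. -/
structure IsModelStructure (W C F : L → L → Prop) : Prop where
  W_subLE : ∀ x y, W x y → x ≤ y
  W_refl : ∀ x, W x x
  C_subLE : ∀ x y, C x y → x ≤ y
  C_refl : ∀ x, C x x
  F_subLE : ∀ x y, F x y → x ≤ y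
  F_refl : ∀ x, F x x
  two_three_comp : ∀ x y z, x ≤ y → y ≤ z → W x y → W y z → W x z
  two_three_right : ∀ x y z, x ≤ y → y ≤ z → W x y → W x z → W y z
  two_three_left : ∀ x y z, x ≤ y → y ≤ z → W y z → W x z → W x y
  lift_AC : ∀ x y, (C x y ∧ W x y) ↔ llp F x y
  lift_C : ∀ x y, C x y ↔ llp (fun a b => F a b ∧ W a b) x y
  lift_F : ∀ x y, F x y ↔ rlp (fun a b => C a b ∧ W a b) x y
  lift_AF : ∀ x y, (F x y ∧ W x y) ↔ rlp C x y
  fact_C_AF : ∀ x y, x ≤ y → ∃ z, x ≤ z ∧ z ≤ y ∧ C x z ∧ F z y ∧ W z y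
  fact_AC_F : ∀ x y, x ≤ y → ∃ z, x ≤ z ∧ z ≤ y ∧ C x z ∧ W x z ∧ F z y

/-- The smallest transfer system containing `S`: the intersection of all transfer
systems containing `S`. -/
def genTS (S : L → L → Prop) (x y : L) : Prop :=
  ∀ T : L → L → Prop, IsTransferSystem T → (∀ a b, S a b → T a b) → T x y

end Defs

/-- A bundled model structure on a lattice. -/
structure ModelStructure (L : Type*) [Lattice L] where
  W : L → L → Prop
  C : L → L → Prop
  F : L → L → Prop
  isModel : IsModelStructure W C F

/-- `M'` is a left Bousfield localization of `M`: same cofibrations, more weak equivalences. -/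
def IsLeftBousfieldLoc {L : Type*} [Lattice L] (M M' : ModelStructure L) : Prop :=
  M'.C = M.C ∧ ∀ x y, M.W x y → M'.W x y

/-- `M'` is a right Bousfield localization of `M`: same fibrations, more weak equivalences. -/
def IsRightBousfieldLoc {L : Type*} [Lattice L] (M M' : ModelStructure L) : Prop :=
  M'.F = M.F ∧ ∀ x y, M.W x y → M'.W x y


/-- For any subrelation `S` of `≤` on a finite lattice, the left lifting
class of `S` is a cotransfer system and the right lifting class is a transfer system. -/
theorem llp_isCotransfer_rlp_isTransfer (L : Type*) [Lattice L] [Fintype L]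
    (S : L → L → Prop) (hS : ∀ x y, S x y → x ≤ y) :
    IsCotransferSystem (llp S) ∧ IsTransferSystem (rlp S) := by
  constructor
  · exact {
      subLE := fun x y h => h.1
      refl := fun x => ⟨le_refl x, fun a b _ hx _ => hx⟩
      trans := fun x y z hxy hyz =>
        ⟨le_trans hxy.1 hyz.1, fun a b hS hx hz =>
          hyz.2 a b hS (hxy.2 a b hS hx (le_trans hyz.1 hz)) hz⟩
      pushout := fun x y z hxy hxz =>
        ⟨le_sup_right, fun a b hS hza hb =>
          sup_le (hxy.2 a b hS (le_trans hxz hza) (le_trans le_sup_left hb)) hza⟩ }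
  · exact {
      subLE := fun x y h => h.1
      refl := fun x => ⟨le_refl x, fun a b _ _ hb => hb⟩
      trans := fun x y z hxy hyz =>
        ⟨le_trans hxy.1 hyz.1, fun a b hS ha hb =>
          hxy.2 a b hS ha (hyz.2 a b hS (le_trans ha hxy.1) hb)⟩
      pullback := fun x y z hxy hzy =>
        ⟨inf_le_right, fun a b hS ha hb =>
          le_inf (hxy.2 a b hS (le_trans ha inf_le_left) (le_trans hb hzy)) hb⟩ }
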